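/- arXiv:1312.5368 — 2 statements merged into one kernel-verified Lean document; each statement's English description precedes it below -/
import Mathlib

section
/- Let V be a real vector space equipped with a symmetric bilinear form ⟨·,·⟩. Suppose H, D₁, …, D_q ∈ V satisfy ⟨H,H⟩ > 0, ⟨H,Dᵢ⟩ > 0 for all i, ⟨Dᵢ,Dⱼ⟩ = 0 for all i ≠ j, and ⟨Dᵢ,Dᵢ⟩ < 0 for all i. Then the vectors H, D₁, …, D_q are linearly independent. -/
/-!
The `Dᵢ` are pairwise orthogonal with `⟨Dᵢ,Dᵢ⟩ ≠ 0`, hence linearly independent, and the form is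
negative semidefinite on their span since `⟨∑ cᵢDᵢ, ∑ cᵢDᵢ⟩ = ∑ cᵢ²⟨Dᵢ,Dᵢ⟩ ≤ 0`. So `H`, having
`⟨H,H⟩ > 0`, does not lie in that span.
-/

namespace LinearMap.BilinForm

variable {R M ι : Type*} [CommRing R] [AddCommGroup M] [Module R M]
  {B : LinearMap.BilinForm R M} {v : ι → M}

theorem apply_sum_smul_self_of_iIsOrtho (hv : B.iIsOrtho v) (s : Finset ι) (c : ι → R) :
    B (∑ i ∈ s, c i • v i) (∑ i ∈ s, c i • v i) = ∑ i ∈ s, c i * c i * B (v i) (v i) := by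
  simp only [sum_left, sum_right, smul_left, smul_right]
  refine Finset.sum_congr rfl fun i hi => ?_
  rw [Finset.sum_eq_single_of_mem i hi fun j _ hji => by rw [hv hji, mul_zero]]
  ring

theorem apply_self_nonpos_of_mem_span [LinearOrder R] [IsStrictOrderedRing R]
    (hv : B.iIsOrtho v) (hnonpos : ∀ i, B (v i) (v i) ≤ 0) {x : M}
    (hx : x ∈ Submodule.span R (Set.range v)) : B x x ≤ 0 := by
  obtain ⟨c, rfl⟩ := Finsupp.mem_span_range_iff_exists_finsupp.mp hx
  rw [Finsupp.sum, apply_sum_smul_self_of_iIsOrtho hv]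
  exact Finset.sum_nonpos fun i _ => mul_nonpos_of_nonneg_of_nonpos (mul_self_nonneg _) (hnonpos i)

end LinearMap.BilinForm

theorem stmt0_general {V : Type*} [AddCommGroup V] [Module ℝ V]
    (B : LinearMap.BilinForm ℝ V)
    (q : ℕ) (H : V) (D : Fin q → V)
    (hH : 0 < B H H)
    (hij : ∀ i j, i ≠ j → B (D i) (D j) = 0)
    (hDi : ∀ i, B (D i) (D i) < 0) :
    LinearIndependent ℝ (Fin.cons H D : Fin (q + 1) → V) := by
  rw [linearIndependent_finCons]
  refine ⟨B.linearIndependent_of_iIsOrtho hij fun i => (hDi i).ne, fun hH_mem => ?_⟩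
  exact hH.not_ge (B.apply_self_nonpos_of_mem_span hij (fun i => (hDi i).le) hH_mem)

/-- If `H, D₁, …, D_q` satisfy `⟨H,H⟩ > 0`, `⟨H,Dᵢ⟩ > 0`, `⟨Dᵢ,Dⱼ⟩ = 0` for `i ≠ j`
and `⟨Dᵢ,Dᵢ⟩ < 0`, then `H, D₁, …, D_q` are linearly independent. -/
theorem stmt0 {V : Type*} [AddCommGroup V] [Module ℝ V]
    (B : LinearMap.BilinForm ℝ V) (hB : B.IsSymm)
    (q : ℕ) (H : V) (D : Fin q → V)
    (hH : 0 < B H H) (hHD : ∀ i, 0 < B H (D i))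
    (hij : ∀ i j, i ≠ j → B (D i) (D j) = 0)
    (hDi : ∀ i, B (D i) (D i) < 0) :
    LinearIndependent ℝ (Fin.cons H D : Fin (q + 1) → V) :=
  stmt0_general B q H D hH hij hDi
end

section
/- Let Λ ⊂ ℂ be the lattice generated by 1 and τ = e^{iπ/3}, and let Y = (ℂ/Λ) × (ℂ/Λ). Consider the images in Y of the four complex lines {w = 0}, {z = 0}, {w = z}, {w = τz} in ℂ². Then any two distinct of these four elliptic curves intersect exactly in the single point (0, 0) ∈ Y. -/
open Complex

noncomputable def hexTau : ℂ := Complex.exp (Real.pi * Complex.I / 3)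

noncomputable def hexLattice : AddSubgroup ℂ := AddSubgroup.closure {1, hexTau}

/-- The elliptic curve `ℂ/Λ`. -/
noncomputable abbrev HexTorus := ℂ ⧸ hexLattice

/-- The abelian surface `Y = (ℂ/Λ) × (ℂ/Λ)`. -/
noncomputable abbrev HexY := HexTorus × HexTorus

/-- Reduction of a point of `ℂ²` modulo `Λ` in each coordinate. -/
noncomputable def hexPr (p : ℂ × ℂ) : HexY :=
  (QuotientAddGroup.mk p.1, QuotientAddGroup.mk p.2)

/-- The four lines `w = 0`, `z = 0`, `w = z`, `w = τz` in coordinates `(w, z)` on `ℂ²`. -/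
noncomputable def hexLine : Fin 4 → Set (ℂ × ℂ)
  | 0 => {p | p.1 = 0}
  | 1 => {p | p.2 = 0}
  | 2 => {p | p.1 = p.2}
  | 3 => {p | p.1 = hexTau * p.2}

lemma hexTau_eq : hexTau = (1 + Real.sqrt 3 * I) / 2 := by
  have : hexTau = Complex.exp ((Real.pi / 3 : ℝ) * I) := by
    unfold hexTau; push_cast; ring_nf
  rw [this, Complex.exp_mul_I]
  rw [← Complex.ofReal_cos, ← Complex.ofReal_sin, Real.cos_pi_div_three, Real.sin_pi_div_three]
  push_cast; ring

lemma hexTau_sq : hexTau ^ 2 = hexTau - 1 := by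
  rw [hexTau_eq]
  have h3 : (Real.sqrt 3 : ℂ) ^ 2 = 3 := by
    norm_cast
    rw [Real.sq_sqrt]; norm_num
  linear_combination (I^2/4) * h3 + (3/4) * Complex.I_sq

lemma hexTau_mem : hexTau ∈ hexLattice :=
  AddSubgroup.subset_closure (by simp)

lemma one_mem' : (1 : ℂ) ∈ hexLattice :=
  AddSubgroup.subset_closure (by simp)

lemma tau_mul_mem {x : ℂ} (hx : x ∈ hexLattice) : hexTau * x ∈ hexLattice := by
  have h : hexLattice ≤ AddSubgroup.comap (AddMonoidHom.mulLeft hexTau) hexLattice := by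
    rw [hexLattice, AddSubgroup.closure_le]
    rintro y (rfl | rfl)
    · show hexTau * 1 ∈ hexLattice
      rw [mul_one]; exact hexTau_mem
    · show hexTau * hexTau ∈ hexLattice
      have : hexTau * hexTau = hexTau - 1 := by
        rw [← sq]; exact hexTau_sq
      rw [this]
      exact sub_mem hexTau_mem one_mem'
  exact h hx

lemma tau_mul_mem_iff {x : ℂ} : hexTau * x ∈ hexLattice ↔ x ∈ hexLattice := by
  constructor
  · intro h
    have h2 : hexTau * x - hexTau * (hexTau * x) ∈ hexLattice :=
      sub_mem h (tau_mul_mem h)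
    have : hexTau * x - hexTau * (hexTau * x) = x := by
      linear_combination (-x) * hexTau_sq
    rwa [this] at h2
  · exact tau_mul_mem

lemma one_sub_tau_mul_mem_iff {x : ℂ} : (1 - hexTau) * x ∈ hexLattice ↔ x ∈ hexLattice := by
  constructor
  · intro h
    have h2 : hexTau * ((1 - hexTau) * x) ∈ hexLattice := tau_mul_mem h
    have : hexTau * ((1 - hexTau) * x) = x := by
      linear_combination (-x) * hexTau_sq
    rwa [this] at h2
  · intro h
    have : (1 - hexTau) * x = x - hexTau * x := by ring
    rw [this]
    exact sub_mem h (tau_mul_mem h)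

lemma mk_eq_zero {x : ℂ} : (QuotientAddGroup.mk x : HexTorus) = 0 ↔ x ∈ hexLattice :=
  QuotientAddGroup.eq_zero_iff x

lemma mk_eq_mk {a b : ℂ} :
    (QuotientAddGroup.mk a : HexTorus) = QuotientAddGroup.mk b ↔ b - a ∈ hexLattice := by
  rw [QuotientAddGroup.eq, neg_add_eq_sub]

lemma zero_mem_line (i : Fin 4) : ((0 : ℂ), (0 : ℂ)) ∈ hexLine i := by
  fin_cases i <;> simp [hexLine]

lemma hexPr_zero : hexPr (0, 0) = ((0 : HexTorus), (0 : HexTorus)) := rfl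

lemma zero_mem_image (i : Fin 4) :
    ((0 : HexTorus), (0 : HexTorus)) ∈ hexPr '' hexLine i :=
  ⟨(0, 0), zero_mem_line i, hexPr_zero⟩

lemma hexPr_eq_zero {a : ℂ × ℂ} (h1 : a.1 ∈ hexLattice) (h2 : a.2 ∈ hexLattice) :
    hexPr a = 0 := by
  simp only [hexPr, Prod.ext_iff, Prod.fst_zero, Prod.snd_zero, mk_eq_zero]
  exact ⟨h1, h2⟩

/-- The key uniqueness fact, for ordered pairs. -/
lemma stmt4_aux (i j : Fin 4) (hij : i < j) :
    (hexPr '' hexLine i) ∩ (hexPr '' hexLine j) = {((0 : HexTorus), (0 : HexTorus))} := by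
  apply Set.eq_singleton_iff_unique_mem.mpr
  refine ⟨⟨zero_mem_image i, zero_mem_image j⟩, ?_⟩
  rintro p ⟨⟨a, ha, rfl⟩, ⟨b, hb, hba⟩⟩
  have h1 : (QuotientAddGroup.mk b.1 : HexTorus) = QuotientAddGroup.mk a.1 :=
    congrArg Prod.fst hba
  have h2 : (QuotientAddGroup.mk b.2 : HexTorus) = QuotientAddGroup.mk a.2 :=
    congrArg Prod.snd hba
  rw [mk_eq_mk] at h1 h2
  fin_cases i <;> fin_cases j <;> simp_all [hexLine]
  · exact hexPr_eq_zero (by rw [ha]; exact zero_mem _) h2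
  · refine hexPr_eq_zero (by rw [ha]; exact zero_mem _) ?_
    have := add_mem h2 h1; simpa using this
  · refine hexPr_eq_zero (by rw [ha]; exact zero_mem _) ?_
    have := add_mem h2 (tau_mul_mem_iff.mp h1); simpa using this
  · refine hexPr_eq_zero ?_ (by rw [ha]; exact zero_mem _)
    have := add_mem h1 h2; simpa using this
  · refine hexPr_eq_zero ?_ (by rw [ha]; exact zero_mem _)
    have := add_mem h1 (tau_mul_mem h2); simpa using this
  · have hk : (1 - hexTau) * b.2 ∈ hexLattice := by
      have hs := sub_mem h2 h1
      have e : a.2 - b.2 - (a.2 - hexTau * b.2) = -((1 - hexTau) * b.2) := by ring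
      rw [e] at hs
      exact neg_mem_iff.mp hs
    have hb2 := one_sub_tau_mul_mem_iff.mp hk
    have ha2 : a.2 ∈ hexLattice := by have := add_mem h2 hb2; simpa using this
    exact hexPr_eq_zero (by rw [ha]; exact ha2) ha2

/-- Any two distinct of the four elliptic curves in `Y = (ℂ/Λ)²`, the images of the lines
`w = 0`, `z = 0`, `w = z`, `w = τz`, intersect exactly in the single point `(0,0)`. -/
theorem stmt4 (i j : Fin 4) (hij : i ≠ j) :
    (hexPr '' hexLine i) ∩ (hexPr '' hexLine j) = {((0 : HexTorus), (0 : HexTorus))} := by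
  rcases lt_or_gt_of_ne hij with h | h
  · exact stmt4_aux i j h
  · rw [Set.inter_comm]; exact stmt4_aux j i h
end
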